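/- Let a be a saturated tropical polynomial in two variables with support a lattice polygon Δ ⊂ ℝ² whose dual complex 𝒫_a is lattice simplicial (every 2-dimensional member contains exactly 3 lattice points). Let x_1, …, x_K be points of V(a), each lying in the relative interior of a 1-dimensional polyhedron (edge) of V(a), with no two x_i on the same edge. Let Γ be the graph with vertex set L(Δ) whose edges are the 1-dimensional members conv(B(x_i)) of 𝒫_a for i = 1, …, K. Then every saturated tropical polynomial a' with support Δ such that x_i ∈ V(a') for all i satisfies a' = a + c·(1, …, 1) for some c ∈ ℝ if and only if Γ is connected. -/

import Mathlib

open Set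
open scoped Classical

/-- A point of `ℝⁿ` with integer coordinates. -/
def IsLatticePoint {n : ℕ} (x : Fin n → ℝ) : Prop := ∀ i, ∃ z : ℤ, x i = (z : ℝ)

/-- The lattice points of a subset of `ℝⁿ`. -/
def latticePts {n : ℕ} (P : Set (Fin n → ℝ)) : Set (Fin n → ℝ) :=
  {x ∈ P | IsLatticePoint x}

/-- A lattice polytope: the convex hull of finitely many lattice points. -/
def IsLatticePolytope {n : ℕ} (P : Set (Fin n → ℝ)) : Prop :=
  ∃ S : Finset (Fin n → ℝ), (∀ x ∈ S, IsLatticePoint x) ∧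
    P = convexHull ℝ (S : Set (Fin n → ℝ))

/-- The dimension of a polytope: the rank of its direction space. -/
noncomputable def polyDim {n : ℕ} (P : Set (Fin n → ℝ)) : ℕ :=
  Module.finrank ℝ (vectorSpan ℝ P)

/-- The inclusion of `ℤⁿ` in `ℝⁿ`. -/
def toR {n : ℕ} (I : Fin n → ℤ) : Fin n → ℝ := fun k => (I k : ℝ)

/-- `I · x`. -/
def dotIR {n : ℕ} (I : Fin n → ℤ) (x : Fin n → ℝ) : ℝ := ∑ k, (I k : ℝ) * x k

/-- `B(x)`: the set of exponents `I ∈ L(Δ)` at which `a_I + I · x` is minimal. -/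
noncomputable def Bset {n : ℕ} (LΔ : Finset (Fin n → ℤ)) (a : (Fin n → ℤ) → ℝ)
    (x : Fin n → ℝ) : Finset (Fin n → ℤ) :=
  LΔ.filter fun I => ∀ J ∈ LΔ, a I + dotIR I x ≤ a J + dotIR J x

/-- `a` is saturated: every exponent attains the minimum somewhere. -/
def Saturated {n : ℕ} (LΔ : Finset (Fin n → ℤ)) (a : (Fin n → ℤ) → ℝ) : Prop :=
  ∀ I ∈ LΔ, ∃ x : Fin n → ℝ, I ∈ Bset LΔ a x

/-- The member `conv(B(x))` of the dual complex. -/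
noncomputable def dualCell {n : ℕ} (LΔ : Finset (Fin n → ℤ)) (a : (Fin n → ℤ) → ℝ)
    (x : Fin n → ℝ) : Set (Fin n → ℝ) :=
  convexHull ℝ (toR '' (Bset LΔ a x : Set (Fin n → ℤ)))

/-- The dual complex `𝒫_a`: all polytopes `conv(B(x))`, `x ∈ ℝⁿ`. -/
def dualComplex {n : ℕ} (LΔ : Finset (Fin n → ℤ)) (a : (Fin n → ℤ) → ℝ) :
    Set (Set (Fin n → ℝ)) :=
  {S | ∃ x : Fin n → ℝ, S = dualCell LΔ a x}

/-!
If `Γ` is disconnected, raise the coefficients of one of its components by a small `ε > 0`.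
Each edge `B(xᵢ) = {p, q}` of `Γ` lies in one component, so the values `a_p + p · xᵢ` and
`a_q + q · xᵢ` stay equal and, for small `ε`, minimal: the new curve still passes through every
`xᵢ`. It is still saturated because lattice simpliciality makes every lattice point a vertex of
`𝒫_a`, i.e. the unique minimizer at some point, and unique minimizers survive small perturbations.

Conversely, if `a'` passes through every `xᵢ`, let `p` minimize `a' - a`. At an edge
`B(xᵢ) = {p, q}` the second minimizer of `a'` at `xᵢ` can only be `q`, and only if
`a'_q - a_q = a'_p - a_p`; so the minimum of `a' - a` spreads along `Γ`.
-/

open Filter Topology Relation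

variable {n : ℕ} {LΔ : Finset (Fin n → ℤ)} {a : (Fin n → ℤ) → ℝ} {x : Fin n → ℝ}

lemma toR_injective : Function.Injective (toR (n := n)) :=
  fun _ _ h => funext fun k => Int.cast_injective (congrFun h k)

lemma dotIR_add_smul (J : Fin n → ℤ) (x w : Fin n → ℝ) (t : ℝ) :
    dotIR J (x + t • w) = dotIR J x + t * dotIR J w := by
  simp [dotIR, mul_add, Finset.sum_add_distrib, Finset.mul_sum, mul_left_comm]

lemma dotIR_eq_apply (f : Module.Dual ℝ (Fin n → ℝ)) (J : Fin n → ℤ) :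
    dotIR J (fun k => f (Pi.single k 1)) = f (toR J) := by
  rw [LinearMap.pi_apply_eq_sum_univ f (toR J), dotIR]
  refine Finset.sum_congr rfl fun k _ => ?_
  simp only [toR, smul_eq_mul]
  congr 2
  ext j
  simp [Pi.single_apply, eq_comm]

lemma mem_Bset {J : Fin n → ℤ} :
    J ∈ Bset LΔ a x ↔ J ∈ LΔ ∧ ∀ K ∈ LΔ, a J + dotIR J x ≤ a K + dotIR K x :=
  Finset.mem_filter

lemma eq_of_mem_Bset {I J : Fin n → ℤ} (hI : I ∈ Bset LΔ a x) (hJ : J ∈ Bset LΔ a x) :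
    a I + dotIR I x = a J + dotIR J x :=
  le_antisymm ((mem_Bset.1 hI).2 J (mem_Bset.1 hJ).1) ((mem_Bset.1 hJ).2 I (mem_Bset.1 hI).1)

lemma lt_of_mem_Bset_of_notMem {I J : Fin n → ℤ} (hI : I ∈ Bset LΔ a x) (hJ : J ∈ LΔ)
    (hJB : J ∉ Bset LΔ a x) : a I + dotIR I x < a J + dotIR J x := by
  simp only [mem_Bset, hJ, true_and, not_forall, not_le] at hJB
  obtain ⟨K, hK, hKJ⟩ := hJB
  exact ((mem_Bset.1 hI).2 K hK).trans_lt hKJ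

lemma Bset_eq_singleton {I : Fin n → ℤ} (hI : I ∈ LΔ)
    (hlt : ∀ J ∈ LΔ.erase I, a I + dotIR I x < a J + dotIR J x) : Bset LΔ a x = {I} := by
  ext J
  rw [mem_Bset, Finset.mem_singleton]
  refine ⟨fun ⟨hJ, hJmin⟩ => by_contra fun hJI => ?_, ?_⟩
  · exact (hJmin I hI).not_gt (hlt J (Finset.mem_erase.2 ⟨hJI, hJ⟩))
  · rintro rfl
    refine ⟨hI, fun K hK => ?_⟩
    rcases eq_or_ne K J with rfl | hKJ
    · exact le_rfl
    · exact (hlt K (Finset.mem_erase.2 ⟨hKJ, hK⟩)).le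

lemma affineIndependent_Bset (hsimp : ∀ P ∈ dualComplex LΔ a, (latticePts P).ncard = polyDim P + 1)
    (x : Fin n → ℝ) : AffineIndependent ℝ fun J : Bset LΔ a x => toR (J : Fin n → ℤ) := by
  set B := Bset LΔ a x
  have hcount := hsimp _ ⟨x, rfl⟩
  have hdim : polyDim (dualCell LΔ a x) =
      Module.finrank ℝ (vectorSpan ℝ (Set.range fun J : B => toR (J : Fin n → ℤ))) := by
    rw [polyDim, dualCell, ← direction_affineSpan, affineSpan_convexHull, direction_affineSpan,
      Set.image_eq_range]
    rfl
  have hcard : B.card ≤ polyDim (dualCell LΔ a x) + 1 := by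
    rw [← hcount, ← Set.ncard_coe_finset, ← Set.ncard_image_of_injective _ toR_injective]
    refine Set.ncard_le_ncard ?_ (Set.finite_of_ncard_pos (by omega))
    rintro _ ⟨J, hJ, rfl⟩
    exact ⟨subset_convexHull ℝ _ ⟨J, hJ, rfl⟩, fun k => ⟨J k, rfl⟩⟩
  rcases B.eq_empty_or_nonempty with hB | hB
  · have : IsEmpty B := Finset.isEmpty_coe_sort.2 hB
    exact affineIndependent_of_subsingleton ℝ _
  · rw [affineIndependent_iff_le_finrank_vectorSpan ℝ _ (n := B.card - 1)
      (by rw [Fintype.card_coe]; have := hB.card_pos; omega), ← hdim]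
    omega

lemma exists_dotIR_eq_add_one {B : Finset (Fin n → ℤ)} {I : Fin n → ℤ} (hI : I ∈ B)
    (hB : AffineIndependent ℝ fun J : B => toR (J : Fin n → ℤ)) :
    ∃ w : Fin n → ℝ, ∀ J ∈ B, J ≠ I → dotIR J w = dotIR I w + 1 := by
  have hli := (affineIndependent_iff_linearIndependent_vsub ℝ _ ⟨I, hI⟩).1 hB
  obtain ⟨f, hf⟩ := Module.exists_dual_forall_apply_eq_one (hli.linearIndepOn Set.univ)
  refine ⟨fun k => f (Pi.single k 1), fun J hJ hJI => ?_⟩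
  have := hf ⟨⟨J, hJ⟩, by simpa using hJI⟩ trivial
  simp only [vsub_eq_sub, map_sub] at this
  rw [dotIR_eq_apply, dotIR_eq_apply]
  linarith

lemma exists_Bset_eq_singleton_of_affineIndependent {I : Fin n → ℤ} (hI : I ∈ Bset LΔ a x)
    (hB : AffineIndependent ℝ fun J : Bset LΔ a x => toR (J : Fin n → ℤ)) :
    ∃ y, Bset LΔ a y = {I} := by
  obtain ⟨w, hw⟩ := exists_dotIR_eq_add_one hI hB
  -- Along `x + t • w`, the other minimizers at `x` fall behind at unit speed and the
  -- non-minimizers stay behind for small `t`.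
  have hev : ∀ J ∈ LΔ.erase I, ∀ᶠ t in 𝓝[>] (0 : ℝ),
      a I + dotIR I (x + t • w) < a J + dotIR J (x + t • w) := by
    intro J hJ
    obtain ⟨hJI, hJ⟩ := Finset.mem_erase.1 hJ
    simp only [dotIR_add_smul]
    by_cases hJB : J ∈ Bset LΔ a x
    · filter_upwards [self_mem_nhdsWithin] with t (ht : 0 < t)
      rw [hw J hJB hJI, mul_add]
      linarith [eq_of_mem_Bset hI hJB]
    · refine nhdsWithin_le_nhds (ContinuousAt.eventually_lt (by fun_prop) (by fun_prop) ?_)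
      simpa using lt_of_mem_Bset_of_notMem hI hJ hJB
  obtain ⟨t, ht⟩ := ((Finset.eventually_all _).2 hev).exists
  exact ⟨x + t • w, Bset_eq_singleton (mem_Bset.1 hI).1 ht⟩

lemma Saturated.exists_Bset_eq_singleton (hsat : Saturated LΔ a)
    (hsimp : ∀ P ∈ dualComplex LΔ a, (latticePts P).ncard = polyDim P + 1)
    {I : Fin n → ℤ} (hI : I ∈ LΔ) : ∃ y, Bset LΔ a y = {I} := by
  obtain ⟨x, hx⟩ := hsat I hI
  exact exists_Bset_eq_singleton_of_affineIndependent hx (affineIndependent_Bset hsimp x)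

lemma eventually_Bset_subset_Bset (LΔ : Finset (Fin n → ℤ)) (a : (Fin n → ℤ) → ℝ)
    (x : Fin n → ℝ) : ∀ᶠ ε in 𝓝[>] (0 : ℝ), ∀ a' : (Fin n → ℤ) → ℝ,
      (∀ J ∈ LΔ, a J ≤ a' J ∧ a' J ≤ a J + ε) →
      (∀ I ∈ Bset LΔ a x, ∀ J ∈ Bset LΔ a x, a' I - a I = a' J - a J) →
      Bset LΔ a x ⊆ Bset LΔ a' x := by
  set B := Bset LΔ a x
  have hgap : ∀ p ∈ B ×ˢ (LΔ \ B), ∀ᶠ ε in 𝓝[>] (0 : ℝ),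
      ε < a p.2 + dotIR p.2 x - (a p.1 + dotIR p.1 x) := by
    rintro ⟨I, J⟩ hIJ
    simp only [Finset.mem_product, Finset.mem_sdiff] at hIJ
    exact nhdsWithin_le_nhds
      (eventually_lt_nhds (sub_pos.2 (lt_of_mem_Bset_of_notMem hIJ.1 hIJ.2.1 hIJ.2.2)))
  filter_upwards [(Finset.eventually_all _).2 hgap] with ε hε a' hbd hconst I hI
  refine mem_Bset.2 ⟨(mem_Bset.1 hI).1, fun J hJ => ?_⟩
  by_cases hJB : J ∈ B
  · linarith [eq_of_mem_Bset hI hJB, hconst I hI J hJB]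
  · linarith [hε (I, J) (by simp [hI, hJ, hJB]), hbd I (mem_Bset.1 hI).1, hbd J hJ]

lemma sub_eq_of_Bset_eq_pair {a' : (Fin n → ℤ) → ℝ} {p q : Fin n → ℤ}
    (hB : Bset LΔ a x = {p, q}) (hB' : 2 ≤ (Bset LΔ a' x).card)
    (hmin : ∀ J ∈ LΔ, a' p - a p ≤ a' J - a J) : a' q - a q = a' p - a p := by
  have hp : p ∈ Bset LΔ a x := hB ▸ Finset.mem_insert_self p {q}
  obtain ⟨r, hr, hrp⟩ := Finset.exists_mem_ne hB' p
  obtain ⟨hrL, hr_min⟩ := mem_Bset.1 hr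
  have h₁ := hr_min p (mem_Bset.1 hp).1
  have h₂ := (mem_Bset.1 hp).2 r hrL
  have h₃ := hmin r hrL
  have hrB : r ∈ Bset LΔ a x :=
    mem_Bset.2 ⟨hrL, fun J hJ => by linarith [(mem_Bset.1 hp).2 J hJ]⟩
  rw [hB, Finset.mem_insert, Finset.mem_singleton] at hrB
  obtain rfl := hrB.resolve_left hrp
  linarith

/-- The edges of the marked subgraph `Γ`. -/
def markedAdj {ι : Type*} (LΔ : Finset (Fin n → ℤ)) (a : (Fin n → ℤ) → ℝ)
    (x : ι → Fin n → ℝ) (p q : Fin n → ℤ) : Prop :=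
  ∃ i, Bset LΔ a (x i) = {p, q}

lemma exists_add_const_of_connected {ι : Type*} {x : ι → Fin n → ℝ}
    (hconn : ∀ u ∈ LΔ, ∀ v ∈ LΔ, ReflTransGen (markedAdj LΔ a x) u v)
    {a' : (Fin n → ℤ) → ℝ} (hB' : ∀ i, 2 ≤ (Bset LΔ a' (x i)).card) :
    ∃ c : ℝ, ∀ I ∈ LΔ, a' I = a I + c := by
  rcases LΔ.eq_empty_or_nonempty with rfl | hne
  · exact ⟨0, by simp⟩
  obtain ⟨I₀, hI₀, hmin⟩ := LΔ.exists_min_image (fun I => a' I - a I) hne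
  refine ⟨a' I₀ - a I₀, fun J hJ => ?_⟩
  suffices a' J - a J = a' I₀ - a I₀ by linarith
  have hpath := hconn I₀ hI₀ J hJ
  clear hJ
  induction hpath with
  | refl => rfl
  | tail _ hpq ih =>
    obtain ⟨i, hi⟩ := hpq
    exact (sub_eq_of_Bset_eq_pair hi (hB' i) (ih ▸ hmin)).trans ih

lemma connected_of_unique {ι : Type*} [Finite ι] {x : ι → Fin n → ℝ} (hsat : Saturated LΔ a)
    (hsimp : ∀ P ∈ dualComplex LΔ a, (latticePts P).ncard = polyDim P + 1)
    (hedge : ∀ i, (Bset LΔ a (x i)).card = 2)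
    (huniq : ∀ a' : (Fin n → ℤ) → ℝ, Saturated LΔ a' → (∀ i, 2 ≤ (Bset LΔ a' (x i)).card) →
      ∃ c : ℝ, ∀ I ∈ LΔ, a' I = a I + c) :
    ∀ u ∈ LΔ, ∀ v ∈ LΔ, ReflTransGen (markedAdj LΔ a x) u v := by
  intro u hu v hv
  by_contra huv
  choose y hy using fun I : LΔ => hsat.exists_Bset_eq_singleton hsimp I.2
  obtain ⟨ε, ⟨hεy, hεx⟩, hε : 0 < ε⟩ :=
    (((eventually_all.2 fun I => eventually_Bset_subset_Bset LΔ a (y I)).and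
      (eventually_all.2 fun i => eventually_Bset_subset_Bset LΔ a (x i))).and
      self_mem_nhdsWithin).exists
  set a' : (Fin n → ℤ) → ℝ := fun I => a I + if ReflTransGen (markedAdj LΔ a x) u I then ε else 0
  have hbd : ∀ J ∈ LΔ, a J ≤ a' J ∧ a' J ≤ a J + ε := fun J _ => by
    simp only [a']
    split_ifs <;> constructor <;> linarith
  have hsat' : Saturated LΔ a' := fun I hI =>
    ⟨y ⟨I, hI⟩, hεy ⟨I, hI⟩ a' hbd (by simp [hy]) (by simp [hy])⟩
  have hcard' : ∀ i, 2 ≤ (Bset LΔ a' (x i)).card := by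
    intro i
    obtain ⟨p, q, -, hpq⟩ := Finset.card_eq_two.1 (hedge i)
    have hreach : ReflTransGen (markedAdj LΔ a x) u p ↔ ReflTransGen (markedAdj LΔ a x) u q :=
      ⟨fun h => h.tail ⟨i, hpq⟩, fun h => h.tail ⟨i, hpq.trans (Finset.pair_comm _ _)⟩⟩
    refine (hedge i).symm.le.trans (Finset.card_le_card (hεx i a' hbd ?_))
    simp only [hpq, Finset.mem_insert, Finset.mem_singleton]
    rintro I (rfl | rfl) J (rfl | rfl) <;> simp [a', hreach]
  obtain ⟨c, hc⟩ := huniq a' hsat' hcard'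
  have hcu := hc u hu
  have hcv := hc v hv
  simp only [a', ReflTransGen.refl, if_true, huv, if_false] at hcu hcv
  linarith

theorem unique_curve_iff_marked_subgraph_connected_general {K : ℕ}
    (LΔ : Finset (Fin 2 → ℤ)) (a : (Fin 2 → ℤ) → ℝ)
    (hsat : Saturated LΔ a)
    (hsimp : ∀ P ∈ dualComplex LΔ a, (latticePts P).ncard = polyDim P + 1)
    (x : Fin K → Fin 2 → ℝ)
    (hedge : ∀ i, (Bset LΔ a (x i)).card = 2) :
    ((∀ a' : (Fin 2 → ℤ) → ℝ, Saturated LΔ a' →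
        (∀ i, 2 ≤ (Bset LΔ a' (x i)).card) →
        ∃ c : ℝ, ∀ I ∈ LΔ, a' I = a I + c) ↔
      ∀ u ∈ LΔ, ∀ v ∈ LΔ,
        Relation.ReflTransGen
          (fun p q : Fin 2 → ℤ => ∃ i, Bset LΔ a (x i) = {p, q}) u v) :=
  ⟨connected_of_unique hsat hsimp hedge,
    fun hconn _ _ hB' => exists_add_const_of_connected hconn hB'⟩

/-- A smooth tropical plane curve through points in the interiors of distinct edges is
uniquely determined by those points iff the corresponding marked subgraph `Γ` of the dual
complex (with vertex set `L(Δ)` and an edge `B(x_i) = {p, q}` for each marked point) is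
connected. -/
theorem unique_curve_iff_marked_subgraph_connected {K : ℕ}
    (Δ : Set (Fin 2 → ℝ)) (LΔ : Finset (Fin 2 → ℤ)) (a : (Fin 2 → ℤ) → ℝ)
    (hΔ : IsLatticePolytope Δ) (hdim : polyDim Δ = 2)
    (hLΔ : ∀ I : Fin 2 → ℤ, I ∈ LΔ ↔ toR I ∈ Δ)
    (hsat : Saturated LΔ a)
    (hsimp : ∀ P ∈ dualComplex LΔ a, (latticePts P).ncard = polyDim P + 1)
    (x : Fin K → Fin 2 → ℝ)
    (hedge : ∀ i, (Bset LΔ a (x i)).card = 2)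
    (hdistinct : ∀ i j, i ≠ j → Bset LΔ a (x i) ≠ Bset LΔ a (x j)) :
    ((∀ a' : (Fin 2 → ℤ) → ℝ, Saturated LΔ a' →
        (∀ i, 2 ≤ (Bset LΔ a' (x i)).card) →
        ∃ c : ℝ, ∀ I ∈ LΔ, a' I = a I + c) ↔
      ∀ u ∈ LΔ, ∀ v ∈ LΔ,
        Relation.ReflTransGen
          (fun p q : Fin 2 → ℤ => ∃ i, Bset LΔ a (x i) = {p, q}) u v) :=
  unique_curve_iff_marked_subgraph_connected_general LΔ a hsat hsimp x hedge
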